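/- Let φ : R → S be a map of commutative noetherian rings and n ≥ 1 an integer. If the André–Quillen homology functor D_n(S/R, −) vanishes identically on the category of S-modules, then for a projective resolution P of the cotangent complex L^φ, the natural map Λ_n(φ) ⊗_S M → P_{n−1} ⊗_S M is injective for every S-module M; consequently Λ_n(φ) is a pure submodule of P_{n−1}, and if P_{n−1} is flat then both Λ_n(φ) and Λ_{n−1}(φ) are flat S-modules. -/

import Mathlib

/-!
Let `φ : R → S` be a map of commutative noetherian rings and `n ≥ 1`.  If the
André–Quillen homology functor `D_n(S/R, −)` vanishes identically, then for a projective
resolution `P` of the cotangent complex `L^φ` the natural map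
`Λ_n(φ) ⊗_S M → P_{n-1} ⊗_S M` is injective for every `S`-module `M` (so `Λ_n(φ)` is a
pure submodule of `P_{n-1}`), and if `P_{n-1}` is flat then both `Λ_n(φ)` and
`Λ_{n-1}(φ)` are flat `S`-modules.
-/

open CategoryTheory Limits

universe u

noncomputable section

/-- Data representing the cotangent complex `L^φ` of `φ : R → S`, given by a projective
resolution `P`. -/
structure CotangentComplexData (R S : Type u) [CommRing R] [CommRing S] [Algebra R S] :
    Type (u + 1) where
  cplx : ChainComplex (ModuleCat.{u} S) ℕ
  projective : ∀ i, Projective (cplx.X i)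
  h0 : Nonempty (cplx.homology 0 ≅ ModuleCat.of S (KaehlerDifferential R S))
  h1 : Function.Surjective (algebraMap R S) →
    Nonempty ((ModuleCat.restrictScalars (algebraMap R S)).obj (cplx.homology 1) ≅
      ModuleCat.of R (RingHom.ker (algebraMap R S)).Cotangent)

/-- André–Quillen homology `D_n(S/R, M) = H_n(L^φ ⊗_S M)`. -/
def AQH {R S : Type u} [CommRing R] [CommRing S] [Algebra R S]
    (L : CotangentComplexData R S) (n : ℕ) (M : ModuleCat.{u} S) : ModuleCat S :=
  ((((MonoidalCategory.tensorRight M).mapHomologicalComplex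
    (ComplexShape.down ℕ)).obj L.cplx).homology n)

/-- The `n`-th cotangent module `Λ_n(φ) = coker(∂ : P_{n+1} → P_n)`. -/
def cotangentModule {R S : Type u} [CommRing R] [CommRing S] [Algebra R S]
    (L : CotangentComplexData R S) (n : ℕ) : ModuleCat S :=
  cokernel (L.cplx.d (n + 1) n)

/-- The natural map `Λ_n(φ) → P_{n-1}` induced by the differential `∂ : P_n → P_{n-1}`. -/
def cotangentModuleToPrev {R S : Type u} [CommRing R] [CommRing S] [Algebra R S]
    (L : CotangentComplexData R S) (n : ℕ) :
    cotangentModule L n ⟶ L.cplx.X (n - 1) :=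
  cokernel.desc (L.cplx.d (n + 1) n) (L.cplx.d n (n - 1)) (L.cplx.d_comp_d (n + 1) n (n - 1))


open TensorProduct in
private lemma lid_lTensor' {S : Type u} [CommRing S] {X Y : Type u} [AddCommGroup X] [Module S X]
    [AddCommGroup Y] [Module S Y] (f : X →ₗ[S] Y) (z : S ⊗[S] X) :
    TensorProduct.lid S Y (LinearMap.lTensor S f z) = f (TensorProduct.lid S X z) := by
  induction z using TensorProduct.induction_on with
  | zero => simp
  | tmul s x => simp
  | add a b ha hb => simp [ha, hb]

open TensorProduct in
private lemma mem_smul_top' {S : Type u} [CommRing S] {X : Type u} [AddCommGroup X] [Module S X]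
    (I : Ideal S) (z : (↥I) ⊗[S] X) :
    TensorProduct.lid S X (LinearMap.rTensor X I.subtype z) ∈ I • (⊤ : Submodule S X) := by
  induction z using TensorProduct.induction_on with
  | zero => simp
  | tmul i x => simpa using Submodule.smul_mem_smul i.2 Submodule.mem_top
  | add a b ha hb => simpa using Submodule.add_mem _ ha hb

open TensorProduct in
private lemma exists_rep_of_mem_smul_top' {S : Type u} [CommRing S] {X : Type u} [AddCommGroup X]
    [Module S X] (I : Ideal S) {x : X} (hx : x ∈ I • (⊤ : Submodule S X)) :
    ∃ z : (↥I) ⊗[S] X, TensorProduct.lid S X (LinearMap.rTensor X I.subtype z) = x := by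
  refine Submodule.smul_induction_on hx ?_ ?_
  · intro i hi x _
    exact ⟨(⟨i, hi⟩ : I) ⊗ₜ x, by simp⟩
  · rintro x y ⟨z1, h1⟩ ⟨z2, h2⟩
    exact ⟨z1 + z2, by simp [h1, h2]⟩

open TensorProduct in
private lemma tmul_one_eq_zero_iff' {S : Type u} [CommRing S] {X : Type u} [AddCommGroup X]
    [Module S X] (I : Ideal S) (x : X) :
    x ⊗ₜ[S] (1 : S ⧸ I) = 0 ↔ x ∈ I • (⊤ : Submodule S X) := by
  rw [← TensorProduct.tensorQuotEquivQuotSMul_symm_mk I x,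
    LinearEquiv.map_eq_zero_iff, Submodule.Quotient.mk_eq_zero]

theorem purity_of_aqh_vanishing
    (R S : Type u) [CommRing R] [CommRing S] [IsNoetherianRing R] [IsNoetherianRing S]
    [Algebra R S] (L : CotangentComplexData R S) (n : ℕ) (hn : 1 ≤ n)
    (hvan : ∀ M : ModuleCat.{u} S, IsZero (AQH L n M)) :
    (∀ M : ModuleCat.{u} S,
      Mono ((MonoidalCategory.tensorRight M).map (cotangentModuleToPrev L n))) ∧
    (Module.Flat S (L.cplx.X (n - 1)) →
      Module.Flat S (cotangentModule L n) ∧ Module.Flat S (cotangentModule L (n - 1))) := by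
  classical
  obtain ⟨m, rfl⟩ : ∃ m, n = m + 1 := ⟨n - 1, (Nat.succ_pred_eq_of_pos hn).symm⟩

  have hmono : ∀ M : ModuleCat.{u} S,
      Mono ((MonoidalCategory.tensorRight M).map (cotangentModuleToPrev L (m + 1))) := by
    intro M
    set K := (((MonoidalCategory.tensorRight M).mapHomologicalComplex
      (ComplexShape.down ℕ)).obj L.cplx) with hK
    have hex : (K.sc' (m + 2) (m + 1) m).Exact := by
      rw [← HomologicalComplex.exactAt_iff' K (m + 2) (m + 1) m (by simp) (by simp)]
      exact (HomologicalComplex.exactAt_iff_isZero_homology _ _).2 (hvan M)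
    rw [ShortComplex.moduleCat_exact_iff] at hex
    rw [ModuleCat.mono_iff_injective, injective_iff_map_eq_zero]
    intro x hx
    have hsurj : Function.Surjective
        ((MonoidalCategory.tensorRight M).map (cokernel.π (L.cplx.d (m + 2) (m + 1)))) :=
      LinearMap.rTensor_surjective M ((ModuleCat.epi_iff_surjective _).1 inferInstance)
    obtain ⟨y, rfl⟩ := hsurj x
    have hx' : ((MonoidalCategory.tensorRight M).map (L.cplx.d (m + 1) m)) y = 0 := by
      rw [← cokernel.π_desc (L.cplx.d (m + 2) (m + 1)) (L.cplx.d (m + 1) m)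
        (L.cplx.d_comp_d _ _ _), Functor.map_comp]
      exact hx
    obtain ⟨z, hz⟩ := hex y hx'
    rw [← hz]
    show ((MonoidalCategory.tensorRight M).map (L.cplx.d (m + 2) (m + 1)) ≫
      (MonoidalCategory.tensorRight M).map (cokernel.π (L.cplx.d (m + 2) (m + 1)))) z = 0
    rw [← Functor.map_comp, cokernel.condition, Functor.map_zero]
    rfl
  refine ⟨hmono, fun hB => ?_⟩
  have hpure : ∀ (M : Type u) [AddCommGroup M] [Module S M],
      Function.Injective (LinearMap.rTensor M
        ((cotangentModuleToPrev L (m + 1)).hom : cotangentModule L (m + 1) →ₗ[S] L.cplx.X m)) := by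
    intro M _ _
    have h := hmono (ModuleCat.of S M)
    rw [ModuleCat.mono_iff_injective] at h
    exact h
  set A := cotangentModule L (m + 1) with hA'
  set B := L.cplx.X m with hB'
  set ι : A →ₗ[S] B := (cotangentModuleToPrev L (m + 1)).hom with hι'
  have hBflat : Module.Flat S B := hB
  have hBinj : ∀ I : Ideal S, Function.Injective (LinearMap.rTensor (↥B) I.subtype) :=
    (Module.Flat.iff_rTensor_injective' (R := S) (M := ↥B)).1 hBflat
  have hAflat : Module.Flat S A := by
    rw [Module.Flat.iff_rTensor_injective']
    intro I
    have h1 : Function.Injective (LinearMap.lTensor (↥I) ι) :=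
      (LinearMap.lTensor_inj_iff_rTensor_inj _ _).2 (hpure (↥I))
    have h3 : Function.Injective (LinearMap.lTensor S ι) :=
      (LinearMap.lTensor_inj_iff_rTensor_inj _ _).2 (hpure S)
    have key : (LinearMap.lTensor S ι).comp (LinearMap.rTensor (↥A) I.subtype)
        = (LinearMap.rTensor (↥B) I.subtype).comp (LinearMap.lTensor (↥I) ι) := by
      rw [LinearMap.lTensor_comp_rTensor, LinearMap.rTensor_comp_lTensor]
    have hcomp : Function.Injective
        (⇑(LinearMap.lTensor S ι) ∘ ⇑(LinearMap.rTensor (↥A) I.subtype)) := by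
      rw [← LinearMap.coe_comp, key, LinearMap.coe_comp]
      exact (hBinj I).comp h1
    exact hcomp.of_comp
  refine ⟨hAflat, ?_⟩
  -- Now flatness of `Λ_{n-1} = coker (d (m+1) m)`.
  set q : B →ₗ[S] (cotangentModule L m) := (cokernel.π (L.cplx.d (m + 1) m)).hom with hq'
  have hqsurj : Function.Surjective q :=
    (ModuleCat.epi_iff_surjective (cokernel.π (L.cplx.d (m + 1) m))).1 inferInstance
  have hqι : q.comp ι = 0 := by
    have : cotangentModuleToPrev L (m + 1) ≫ cokernel.π (L.cplx.d (m + 1) m) = 0 := by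
      delta cotangentModuleToPrev
      delta cotangentModule
      rw [← cancel_epi (cokernel.π (L.cplx.d (m + 1 + 1) (m + 1))), comp_zero,
        cokernel.π_desc_assoc]
      exact cokernel.condition _
    exact congrArg ModuleCat.Hom.hom this
  have hker : ∀ b : B, q b = 0 → ∃ a : A, ι a = b := by
    intro b hb
    have hb' : (LinearMap.range (L.cplx.d (m + 1) m).hom).mkQ b = 0 := by
      have h2 := ModuleCat.cokernel_π_cokernelIsoRangeQuotient_hom_apply (L.cplx.d (m + 1) m) b
      have h3 : (ModuleCat.cokernelIsoRangeQuotient (L.cplx.d (m + 1) m)).hom (q b)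
          = (LinearMap.range (L.cplx.d (m + 1) m).hom).mkQ b := h2
      rw [← h3, hb]
      exact map_zero (ModuleCat.cokernelIsoRangeQuotient (L.cplx.d (m + 1) m)).hom.hom
    rw [Submodule.mkQ_apply, Submodule.Quotient.mk_eq_zero] at hb'
    obtain ⟨y, hy⟩ := hb'
    refine ⟨cokernel.π (L.cplx.d (m + 2) (m + 1)) y, ?_⟩
    have : (cokernel.π (L.cplx.d (m + 2) (m + 1)) ≫ cotangentModuleToPrev L (m + 1)) y = b := by
      delta cotangentModuleToPrev
      rw [cokernel.π_desc]
      exact hy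
    exact this
  rw [Module.Flat.iff_rTensor_injective']
  intro I
  rw [injective_iff_map_eq_zero]
  intro x hx
  obtain ⟨y, rfl⟩ := LinearMap.lTensor_surjective (↥I) hqsurj x
  set y' := LinearMap.rTensor (↥B) I.subtype y with hy'
  have hcomm : LinearMap.lTensor S q y' = 0 := by
    have e1 : (LinearMap.lTensor S q).comp (LinearMap.rTensor (↥B) I.subtype)
        = (LinearMap.rTensor _ I.subtype).comp (LinearMap.lTensor (↥I) q) := by
      rw [LinearMap.lTensor_comp_rTensor, LinearMap.rTensor_comp_lTensor]
    calc LinearMap.lTensor S q y'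
        = ((LinearMap.lTensor S q).comp (LinearMap.rTensor (↥B) I.subtype)) y := rfl
      _ = ((LinearMap.rTensor _ I.subtype).comp (LinearMap.lTensor (↥I) q)) y := by rw [e1]
      _ = 0 := hx
  set b := TensorProduct.lid S (↥B) y' with hb'
  have hqb : q b = 0 := by
    rw [hb', ← lid_lTensor' q y', hcomm, map_zero]
  obtain ⟨a, ha⟩ := hker b hqb
  have hbmem : b ∈ I • (⊤ : Submodule S (↥B)) := mem_smul_top' I y
  have hamem : a ∈ I • (⊤ : Submodule S (↥A)) := by
    rw [← tmul_one_eq_zero_iff' I a]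
    apply hpure (S ⧸ I)
    have : LinearMap.rTensor (S ⧸ I) ι (a ⊗ₜ[S] (1 : S ⧸ I)) = b ⊗ₜ[S] (1 : S ⧸ I) := by
      rw [LinearMap.rTensor_tmul, ha]
    rw [map_zero]
    exact this.trans ((tmul_one_eq_zero_iff' I b).2 hbmem)
  obtain ⟨z, hz⟩ := exists_rep_of_mem_smul_top' I hamem
  have hzy : LinearMap.lTensor (↥I) ι z = y := by
    apply hBinj I
    apply (TensorProduct.lid S (↥B)).injective
    have e2 : (LinearMap.rTensor (↥B) I.subtype).comp (LinearMap.lTensor (↥I) ι)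
        = (LinearMap.lTensor S ι).comp (LinearMap.rTensor (↥A) I.subtype) := by
      rw [LinearMap.lTensor_comp_rTensor, LinearMap.rTensor_comp_lTensor]
    calc (TensorProduct.lid S (↥B)) (LinearMap.rTensor (↥B) I.subtype
            (LinearMap.lTensor (↥I) ι z))
        = (TensorProduct.lid S (↥B)) (((LinearMap.rTensor (↥B) I.subtype).comp
            (LinearMap.lTensor (↥I) ι)) z) := rfl
      _ = (TensorProduct.lid S (↥B)) ((LinearMap.lTensor S ι)
            (LinearMap.rTensor (↥A) I.subtype z)) := by rw [e2]; rfl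
      _ = ι ((TensorProduct.lid S (↥A)) (LinearMap.rTensor (↥A) I.subtype z)) :=
            lid_lTensor' ι _
      _ = ι a := by rw [hz]
      _ = b := ha
      _ = (TensorProduct.lid S (↥B)) y' := rfl
  rw [← hzy, ← LinearMap.comp_apply, ← LinearMap.lTensor_comp, hqι, LinearMap.lTensor_zero,
    LinearMap.zero_apply]
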